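/- arXiv:2211.06231 — 2 statements merged into one kernel-verified Lean document; each statement's English description precedes it below -/
import Mathlib

section
/- Let ρ̄ > 0. There exists a constant C > 0, depending only on ρ̄, such that: for every measurable, ℤ³-periodic, nonnegative function ρ on ℝ³ with ρ ≤ ρ̄ almost everywhere and ∫_{[0,1]³} ρ dx = 1, and every smooth ℤ³-periodic vector field u : ℝ³ → ℝ³ with ∫_{[0,1]³} ρ u dx = 0, one has both ∫_{[0,1]³} ρ|u|² dx ≤ C ∫_{[0,1]³} |∇u|² dx and ∫_{[0,1]³} |u|² dx ≤ C ∫_{[0,1]³} |∇u|² dx. -/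
open MeasureTheory Set

noncomputable section

/-- The spatial domain `ℝ³` (as functions `Fin 3 → ℝ`). -/
abbrev Sp : Type := Fin 3 → ℝ

/-- Integer lattice `ℤ³`. -/
abbrev Z3 : Type := Fin 3 → ℤ

/-- The lattice vector associated to `k ∈ ℤ³`. -/
def zvec (k : Z3) : Sp := fun i => (k i : ℝ)

/-- `ℤ³`-periodicity for complex-valued functions. -/
def PerC (f : Sp → ℂ) : Prop := ∀ (k : Z3) (x : Sp), f (x + zvec k) = f x

/-- `ℤ³`-periodicity for real-valued functions. -/
def PerR (f : Sp → ℝ) : Prop := ∀ (k : Z3) (x : Sp), f (x + zvec k) = f x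

/-- `ℤ³`-periodicity for vector fields. -/
def PerV (u : Sp → Sp) : Prop := ∀ (k : Z3) (x : Sp), u (x + zvec k) = u x

/-- Fundamental domain `[0,1]³` of the torus. -/
def cube : Set Sp := Set.Icc 0 1

/-- Dot product of `k ∈ ℤ³` with `x ∈ ℝ³`. -/
def dotZ (k : Z3) (x : Sp) : ℝ := ∑ i, (k i : ℝ) * x i

/-- Squared Euclidean norm of `k ∈ ℤ³`. -/
def knormSq (k : Z3) : ℝ := ∑ i, ((k i : ℝ)) ^ 2

/-- Fourier coefficient `f̂(k) = ∫_{[0,1]³} f(x) e^{-2πi k·x} dx`. -/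
def fc (f : Sp → ℂ) (k : Z3) : ℂ :=
  ∫ x in cube, f x * Complex.exp (-((2 * Real.pi * dotZ k x : ℝ) : ℂ) * Complex.I)

/-- Sobolev norm `‖f‖_{H^s}` of a complex-valued function. -/
def HnormC (s : ℝ) (f : Sp → ℂ) : ℝ :=
  Real.sqrt (∑' k : Z3, (1 + knormSq k) ^ s * ‖fc f k‖ ^ 2)

/-- Sobolev norm of a real-valued function. -/
def HnormR (s : ℝ) (f : Sp → ℝ) : ℝ := HnormC s (fun x => (f x : ℂ))

/-- Sobolev norm of a vector field (components combined in the `ℓ²` sense). -/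
def HnormV (s : ℝ) (u : Sp → Sp) : ℝ :=
  Real.sqrt (∑ i : Fin 3, (HnormR s (fun x => u x i)) ^ 2)

/-- Partial derivative `∂ᵢ f` of a real-valued function. -/
def pd (i : Fin 3) (f : Sp → ℝ) (x : Sp) : ℝ := fderiv ℝ f x (Pi.single i 1)

/-- Partial derivative `∂ᵢ f` of a complex-valued function. -/
def pdC (i : Fin 3) (f : Sp → ℂ) (x : Sp) : ℂ := fderiv ℝ f x (Pi.single i 1)

/-- Divergence of a vector field. -/
def divg (u : Sp → Sp) (x : Sp) : ℝ := ∑ i, pd i (fun y => u y i) x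

/-- Laplacian of a real-valued function. -/
def lap (f : Sp → ℝ) (x : Sp) : ℝ := ∑ i, pd i (fun y => pd i f y) x

/-- `L^∞` norm of a real-valued function. -/
def LinfR (f : Sp → ℝ) : ℝ := ⨆ x : Sp, |f x|

/-- `L^∞` norm of a complex-valued function. -/
def LinfC (f : Sp → ℂ) : ℝ := ⨆ x : Sp, ‖f x‖

/-- `L^∞` norm of a vector field (`ℓ²` in the components). -/
def LinfV (u : Sp → Sp) : ℝ := ⨆ x : Sp, Real.sqrt (∑ i, (u x i) ^ 2)

/-- `L^∞` norm of the full gradient matrix of a vector field. -/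
def LinfGrad (u : Sp → Sp) : ℝ :=
  ⨆ x : Sp, Real.sqrt (∑ i, ∑ j, (pd j (fun y => u y i) x) ^ 2)

/-- Gradient of a real-valued function. -/
def gradV (f : Sp → ℝ) (x : Sp) : Sp := fun i => pd i f x

/-- The Diophantine condition on `n ∈ ℝ³` with constants `c > 0`, `r > 2`. -/
def Diophantine (n : Sp) (c r : ℝ) : Prop :=
  ∀ k : Z3, k ≠ 0 → c / (Real.sqrt (knormSq k)) ^ r ≤ |∑ i, n i * (k i : ℝ)|

set_option maxHeartbeats 1000000

namespace TP

def II : Set ℝ := Set.Icc 0 1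

lemma measI : MeasurableSet II := measurableSet_Icc
lemma volI : volume II = 1 := by simp [II]
lemma compactI : IsCompact II := isCompact_Icc

lemma intconst (c : ℝ) : (∫ _ in II, c) = c := by
  simp [volI, measureReal_def]

lemma measCube : MeasurableSet cube := measurableSet_Icc
lemma compactCube : IsCompact cube := isCompact_Icc
lemma volCube : volume cube = 1 := by
  have : volume (cube) = ∏ i : Fin 3, ENNReal.ofReal ((1:Sp) i - (0:Sp) i) :=
    Real.volume_Icc_pi
  simpa using this

instance : IsProbabilityMeasure (volume.restrict cube) := by
  constructor
  simp [Measure.restrict_apply, volCube]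

lemma intconstC (c : ℝ) : (∫ _ in cube, c) = c := by
  simp [volCube]

/-- coordinate change -/
def m (p : ℝ × ℝ × ℝ) : Sp := ![p.1, p.2.1, p.2.2]

lemma eta3 (x : Sp) : (![x 0, x 1, x 2] : Sp) = x := by
  funext j; fin_cases j <;> simp

def e : Sp ≃ᵐ ℝ × (ℝ × ℝ) :=
  (MeasurableEquiv.piFinSuccAbove (fun _ : Fin 3 => ℝ) 0).trans
    ((MeasurableEquiv.refl ℝ).prodCongr (MeasurableEquiv.finTwoArrow))

lemma e_mp : MeasurePreserving e := by
  have h1 := volume_preserving_piFinSuccAbove (fun _ : Fin 3 => ℝ) 0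
  have h2 := (MeasurePreserving.id (volume : Measure ℝ)).prod
    (volume_preserving_finTwoArrow ℝ)
  exact h2.comp h1

lemma e_apply (x : Sp) : e x = (x 0, (x 1, x 2)) := by
  simp [e, MeasurableEquiv.piFinSuccAbove, MeasurableEquiv.finTwoArrow,
    MeasurableEquiv.piFinTwo, MeasurableEquiv.prodCongr, MeasurableEquiv.trans,
    Fin.insertNthEquiv]
  constructor
  · rfl
  · constructor <;> rfl

def Q3 : Set (ℝ × ℝ × ℝ) := II ×ˢ (II ×ˢ II)

lemma cube_preimage : cube = e ⁻¹' Q3 := by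
  ext x
  simp only [Set.mem_preimage, e_apply, Q3, Set.mem_prod, cube, II, Set.mem_Icc]
  constructor
  · rintro ⟨h0, h1⟩
    exact ⟨⟨h0 0, h1 0⟩, ⟨h0 1, h1 1⟩, ⟨h0 2, h1 2⟩⟩
  · rintro ⟨⟨a0, a1⟩, ⟨b0, b1⟩, ⟨c0, c1⟩⟩
    constructor <;> intro j <;> fin_cases j <;> simp_all

lemma m_e (x : Sp) : m (e x) = x := by
  rw [e_apply]; exact eta3 x

/-- transfer lemma -/
lemma transfer (h : Sp → ℝ) :
    (∫ x in cube, h x) = ∫ p in Q3, h (m p) := by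
  have := e_mp.setIntegral_preimage_emb e.measurableEmbedding (fun p => h (m p)) Q3
  rw [cube_preimage]
  rw [← this]
  refine setIntegral_congr_fun (by rw [← cube_preimage]; exact measCube) ?_
  intro x _
  simp only [m_e]




/-- integrability of continuous functions on II ×ˢ II -/
lemma intg2 {h : ℝ × ℝ → ℝ} (hh : Continuous h) :
    Integrable h ((volume.restrict II).prod (volume.restrict II)) := by
  rw [Measure.prod_restrict]
  exact hh.continuousOn.integrableOn_compact (compactI.prod compactI)

/-- swap lemma -/
lemma swap2 {h : ℝ × ℝ → ℝ} (hh : Continuous h) :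
    (∫ a in II, ∫ b in II, h (a, b)) = ∫ b in II, ∫ a in II, h (a, b) :=
  integral_integral_swap (intg2 hh)

/-- parametric continuity -/
lemma pcont {X : Type*} [TopologicalSpace X] [FirstCountableTopology X]
    [LocallyCompactSpace X] {h : X → ℝ → ℝ} (hh : Continuous fun p : X × ℝ => h p.1 p.2) :
    Continuous fun x => ∫ t in II, h x t :=
  continuous_parametric_integral_of_continuous hh compactI

/-- iterated integral over Q3 -/
lemma iter3 {h : ℝ × ℝ × ℝ → ℝ} (hh : Continuous h) :
    (∫ p in Q3, h p) = ∫ a in II, ∫ b in II, ∫ c in II, h (a, b, c) := by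
  have hQmeas : IsCompact Q3 := compactI.prod (compactI.prod compactI)
  have hint : Integrable h ((volume.restrict II).prod
      ((volume.restrict II).prod (volume.restrict II))) := by
    rw [Measure.prod_restrict, Measure.prod_restrict]
    exact hh.continuousOn.integrableOn_compact hQmeas
  have h1 : (∫ p in Q3, h p) = ∫ p, h p ∂((volume.restrict II).prod
      ((volume.restrict II).prod (volume.restrict II))) := by
    rw [Measure.prod_restrict, Measure.prod_restrict]
    rfl
  rw [h1, integral_prod _ hint]
  refine integral_congr_ae (Filter.Eventually.of_forall fun a => ?_)
  have hint2 : Integrable (fun q : ℝ × ℝ => h (a, q))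
      ((volume.restrict II).prod (volume.restrict II)) :=
    intg2 (hh.comp (continuous_const.prodMk continuous_id))
  exact integral_prod _ hint2

/-- Cauchy-Schwarz with constant 1 for probability measures -/
lemma cs {α : Type*} [MeasurableSpace α] {μ : Measure α} [IsProbabilityMeasure μ]
    {g : α → ℝ} (h1 : Integrable g μ) (h2 : Integrable (fun x => g x ^ 2) μ) :
    (∫ x, g x ∂μ) ^ 2 ≤ ∫ x, g x ^ 2 ∂μ := by
  set c := ∫ x, g x ∂μ with hc
  have hnn : (0:ℝ) ≤ ∫ x, (g x - c) ^ 2 ∂μ :=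
    integral_nonneg fun x => sq_nonneg _
  have hexp : (∫ x, (g x - c) ^ 2 ∂μ) = (∫ x, g x ^ 2 ∂μ) - 2 * c * c + c ^ 2 := by
    have : (fun x => (g x - c) ^ 2) = fun x => g x ^ 2 - 2 * c * g x + c ^ 2 := by
      funext x; ring
    rw [this]
    have hA : Integrable (fun x => g x ^ 2 - 2 * c * g x) μ := h2.sub (h1.const_mul _)
    rw [integral_add (f := fun x => g x ^ 2 - 2 * c * g x) (g := fun _ => c ^ 2) hA
      (integrable_const _)]
    rw [integral_sub (f := fun x => g x ^ 2) (g := fun x => 2 * c * g x) h2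
      (h1.const_mul (2 * c))]
    rw [MeasureTheory.integral_const_mul, integral_const]
    simp [← hc]
  nlinarith [hnn, hexp]

/-- CS on II -/
lemma csI {g : ℝ → ℝ} (hg : Continuous g) :
    (∫ t in II, g t) ^ 2 ≤ ∫ t in II, g t ^ 2 := by
  have : IsProbabilityMeasure (volume.restrict II) := by
    constructor; simp [Measure.restrict_apply, volI]
  exact cs (hg.continuousOn.integrableOn_compact compactI)
    ((hg.pow 2).continuousOn.integrableOn_compact compactI)

/-- key interval bound -/
lemma sq_interval_le {g : ℝ → ℝ} (hg : Continuous g) {r s : ℝ}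
    (hr : r ∈ II) (hs : s ∈ II) :
    (∫ t in r..s, g t) ^ 2 ≤ ∫ t in II, g t ^ 2 := by
  have h1 : |∫ t in r..s, g t| ≤ ∫ t in Set.uIoc r s, |g t| := by
    simpa using intervalIntegral.norm_integral_le_integral_norm_uIoc (f := g) (a := r) (b := s)
  have h2 : (∫ t in Set.uIoc r s, |g t|) ≤ ∫ t in II, |g t| := by
    apply setIntegral_mono_set
    · exact hg.abs.continuousOn.integrableOn_compact compactI
    · exact Filter.Eventually.of_forall fun t => abs_nonneg _
    · refine HasSubset.Subset.eventuallyLE ?_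
      refine (Set.uIoc_subset_uIcc).trans ?_
      have : Set.uIcc (0:ℝ) 1 = II := by
        rw [Set.uIcc_of_le]; · rfl
        · norm_num
      rw [← this]
      refine Set.uIcc_subset_uIcc ?_ ?_ <;>
        [skip; skip] <;>
        · rw [Set.uIcc_of_le (by norm_num : (0:ℝ) ≤ 1)]
          assumption
  have h3 : (∫ t in II, |g t|) ^ 2 ≤ ∫ t in II, |g t| ^ 2 := csI hg.abs
  have h4 : (∫ t in II, |g t| ^ 2) = ∫ t in II, g t ^ 2 := by
    refine integral_congr_ae (Filter.Eventually.of_forall fun t => ?_)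
    exact sq_abs _
  have h5 : (0:ℝ) ≤ ∫ t in II, |g t| := integral_nonneg fun t => abs_nonneg _
  have h6 : |∫ t in r..s, g t| ≤ ∫ t in II, |g t| := h1.trans h2
  nlinarith [abs_nonneg (∫ t in r..s, g t), sq_abs (∫ t in r..s, g t)]





lemma mcont : Continuous m := by
  apply continuous_pi
  intro j
  fin_cases j <;> simp [m] <;> fun_prop

lemma pdcont (i : Fin 3) (hf : ContDiff ℝ (⊤ : ℕ∞) f) : Continuous (pd i f) := by
  have h1 : Continuous (fderiv ℝ f) := hf.continuous_fderiv (by simp)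
  exact h1.clm_apply continuous_const

lemma upd_line (w : Sp) (i : Fin 3) (s : ℝ) :
    Function.update w i s = Function.update w i 0 + s • (Pi.single i 1 : Sp) := by
  funext j
  by_cases h : j = i
  · subst h; simp
  · simp [Function.update_of_ne h, Pi.single_eq_of_ne h]

lemma hd (hf : ContDiff ℝ (⊤ : ℕ∞) f) (w : Sp) (i : Fin 3) (t : ℝ) :
    HasDerivAt (fun s => f (Function.update w i s))
      (pd i f (Function.update w i t)) t := by
  have h1 : HasDerivAt (fun s : ℝ => Function.update w i 0 + s • (Pi.single i 1 : Sp))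
      (Pi.single i 1) t := by
    simpa using ((hasDerivAt_id t).smul_const (Pi.single i 1 : Sp)).const_add
      (Function.update w i 0)
  have h2 : HasFDerivAt f (fderiv ℝ f (Function.update w i t)) (Function.update w i t) :=
    (hf.differentiable (by simp) (Function.update w i t)).hasFDerivAt
  have h2' : HasFDerivAt f (fderiv ℝ f (Function.update w i t))
      (Function.update w i 0 + t • (Pi.single i 1 : Sp)) := by
    rwa [← upd_line]
  have h3 := h2'.comp_hasDerivAt t h1
  have h4 : (f ∘ fun s : ℝ => Function.update w i 0 + s • (Pi.single i 1 : Sp))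
      = fun s => f (Function.update w i s) := by
    funext s; simp only [Function.comp]; rw [← upd_line]
  rw [h4] at h3
  exact h3

lemma ftc (hf : ContDiff ℝ (⊤ : ℕ∞) f) (w : Sp) (i : Fin 3) (r s : ℝ) :
    f (Function.update w i s) - f (Function.update w i r)
      = ∫ t in r..s, pd i f (Function.update w i t) := by
  have hcont : Continuous fun t => pd i f (Function.update w i t) := by
    have : Continuous fun t : ℝ => Function.update w i t := by
      rw [funext (upd_line w i)]
      fun_prop
    exact (pdcont i hf).comp this
  exact (intervalIntegral.integral_eq_sub_of_hasDerivAt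
    (fun t _ => hd hf w i t) (hcont.intervalIntegrable r s)).symm

def K0 (f : Sp → ℝ) (b c : ℝ) : ℝ := ∫ t in II, (pd 0 f (m (t, b, c))) ^ 2
def K1 (f : Sp → ℝ) (a c : ℝ) : ℝ := ∫ t in II, (pd 1 f (m (a, t, c))) ^ 2
def K2 (f : Sp → ℝ) (a b : ℝ) : ℝ := ∫ t in II, (pd 2 f (m (a, b, t))) ^ 2

lemma K0cont (hf : ContDiff ℝ (⊤ : ℕ∞) f) : Continuous fun q : ℝ × ℝ => K0 f q.1 q.2 := by
  apply pcont (h := fun (q : ℝ × ℝ) (t : ℝ) => (pd 0 f (m (t, q.1, q.2))) ^ 2)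
  exact (((pdcont 0 hf).comp (mcont.comp (by fun_prop))).pow 2)

lemma K1cont (hf : ContDiff ℝ (⊤ : ℕ∞) f) : Continuous fun q : ℝ × ℝ => K1 f q.1 q.2 := by
  apply pcont (h := fun (q : ℝ × ℝ) (t : ℝ) => (pd 1 f (m (q.1, t, q.2))) ^ 2)
  exact (((pdcont 1 hf).comp (mcont.comp (by fun_prop))).pow 2)

lemma K2cont (hf : ContDiff ℝ (⊤ : ℕ∞) f) : Continuous fun q : ℝ × ℝ => K2 f q.1 q.2 := by
  apply pcont (h := fun (q : ℝ × ℝ) (t : ℝ) => (pd 2 f (m (q.1, q.2, t))) ^ 2)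
  exact (((pdcont 2 hf).comp (mcont.comp (by fun_prop))).pow 2)

lemma upd0 (w : Sp) (t : ℝ) : Function.update w 0 t = m (t, w 1, w 2) := by
  funext j; fin_cases j <;> simp [m, Function.update]

lemma upd1 (w : Sp) (a t : ℝ) :
    Function.update (Function.update w 0 a) 1 t = m (a, t, w 2) := by
  funext j; fin_cases j <;> simp [m, Function.update]

lemma upd2 (w : Sp) (a b t : ℝ) :
    Function.update (Function.update (Function.update w 0 a) 1 b) 2 t = m (a, b, t) := by
  funext j; fin_cases j <;> simp [m, Function.update]

lemma coordII {x : Sp} (hx : x ∈ cube) (j : Fin 3) : x j ∈ II := by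
  constructor
  · simpa using hx.1 j
  · simpa using hx.2 j

lemma chainbound (hf : ContDiff ℝ (⊤ : ℕ∞) f) {x y : Sp} (hx : x ∈ cube) (hy : y ∈ cube) :
    (f x - f y) ^ 2 ≤ 3 * (K0 f (y 1) (y 2) + K1 f (x 0) (y 2) + K2 f (x 0) (x 1)) := by
  set z1 := Function.update y 0 (x 0) with hz1
  set z2 := Function.update z1 1 (x 1) with hz2
  have hz3 : Function.update z2 2 (x 2) = x := by
    funext j; fin_cases j <;> simp [hz2, hz1, Function.update]
  -- step differences
  have d1 : f z1 - f y = ∫ t in (y 0)..(x 0), pd 0 f (Function.update y 0 t) := by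
    have := ftc hf y 0 (y 0) (x 0)
    rwa [Function.update_eq_self] at this
  have d2 : f z2 - f z1 = ∫ t in (y 1)..(x 1), pd 1 f (Function.update z1 1 t) := by
    have := ftc hf z1 1 (z1 1) (x 1)
    rw [Function.update_eq_self] at this
    have hz11 : z1 1 = y 1 := by simp [hz1, Function.update]
    rwa [hz11] at this
  have d3 : f x - f z2 = ∫ t in (y 2)..(x 2), pd 2 f (Function.update z2 2 t) := by
    have := ftc hf z2 2 (z2 2) (x 2)
    rw [Function.update_eq_self, hz3] at this
    have hz22 : z2 2 = y 2 := by simp [hz2, hz1, Function.update]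
    rwa [hz22] at this
  -- continuity of integrands
  have c1 : Continuous fun t => pd 0 f (Function.update y 0 t) := by
    simp only [upd0]
    exact (pdcont 0 hf).comp (mcont.comp (by fun_prop))
  have c2 : Continuous fun t => pd 1 f (Function.update z1 1 t) := by
    have : ∀ t, Function.update z1 1 t = m (x 0, t, y 2) := by
      intro t
      rw [hz1, upd1]
    simp only [this]
    exact (pdcont 1 hf).comp (mcont.comp (by fun_prop))
  have c3 : Continuous fun t => pd 2 f (Function.update z2 2 t) := by
    have : ∀ t, Function.update z2 2 t = m (x 0, x 1, t) := by
      intro t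
      rw [hz2, hz1, upd2]
    simp only [this]
    exact (pdcont 2 hf).comp (mcont.comp (by fun_prop))
  -- squared bounds
  have b1 : (f z1 - f y) ^ 2 ≤ K0 f (y 1) (y 2) := by
    rw [d1]
    have h := sq_interval_le c1 (coordII hy 0) (coordII hx 0)
    have e : (∫ t in II, (pd 0 f (Function.update y 0 t)) ^ 2) = K0 f (y 1) (y 2) := by
      rw [K0]; simp only [upd0]
    rwa [e] at h
  have b2 : (f z2 - f z1) ^ 2 ≤ K1 f (x 0) (y 2) := by
    rw [d2]
    have h := sq_interval_le c2 (coordII hy 1) (coordII hx 1)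
    have eup : ∀ t, Function.update z1 1 t = m (x 0, t, y 2) := fun t => by
      rw [hz1, upd1]
    have e : (∫ t in II, (pd 1 f (Function.update z1 1 t)) ^ 2) = K1 f (x 0) (y 2) := by
      rw [K1]; simp only [eup]
    rwa [e] at h
  have b3 : (f x - f z2) ^ 2 ≤ K2 f (x 0) (x 1) := by
    rw [d3]
    have h := sq_interval_le c3 (coordII hy 2) (coordII hx 2)
    have eup : ∀ t, Function.update z2 2 t = m (x 0, x 1, t) := fun t => by
      rw [hz2, hz1, upd2]
    have e : (∫ t in II, (pd 2 f (Function.update z2 2 t)) ^ 2) = K2 f (x 0) (x 1) := by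
      rw [K2]; simp only [eup]
    rwa [e] at h
  have hsum : f x - f y = (f z1 - f y) + (f z2 - f z1) + (f x - f z2) := by ring
  nlinarith [sq_nonneg ((f z1 - f y) - (f z2 - f z1)),
    sq_nonneg ((f z1 - f y) - (f x - f z2)),
    sq_nonneg ((f z2 - f z1) - (f x - f z2)), hsum, b1, b2, b3]



lemma intgC {g : Sp → ℝ} (hg : Continuous g) : IntegrableOn g cube :=
  hg.continuousOn.integrableOn_compact compactCube

lemma hm0 (p : ℝ × ℝ × ℝ) : m p 0 = p.1 := by simp [m]
lemma hm1 (p : ℝ × ℝ × ℝ) : m p 1 = p.2.1 := by simp [m]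
lemma hm2 (p : ℝ × ℝ × ℝ) : m p 2 = p.2.2 := by simp [m]

lemma IA (hf : ContDiff ℝ (⊤ : ℕ∞) f) :
    (∫ y in cube, K0 f (y 1) (y 2)) = ∫ x in cube, (pd 0 f x) ^ 2 := by
  have hc : Continuous fun p : ℝ × ℝ × ℝ => (pd 0 f (m p)) ^ 2 :=
    ((pdcont 0 hf).comp mcont).pow 2
  rw [transfer (fun y => K0 f (y 1) (y 2)), transfer (fun x => (pd 0 f x) ^ 2)]
  simp only [hm1, hm2]
  have hK : Continuous fun p : ℝ × ℝ × ℝ => K0 f p.2.1 p.2.2 :=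
    (K0cont hf).comp (show Continuous fun p : ℝ × ℝ × ℝ => (p.2.1, p.2.2) by fun_prop)
  rw [iter3 (h := fun p : ℝ × ℝ × ℝ => K0 f p.2.1 p.2.2) hK]
  rw [iter3 (h := fun p : ℝ × ℝ × ℝ => (pd 0 f (m p)) ^ 2) hc]
  simp only []
  rw [intconst]
  simp only [K0]
  have sw1 : ∀ b : ℝ, (∫ c in II, ∫ t in II, (pd 0 f (m (t, b, c))) ^ 2)
      = ∫ t in II, ∫ c in II, (pd 0 f (m (t, b, c))) ^ 2 := by
    intro b
    exact swap2 (h := fun ct : ℝ × ℝ => (pd 0 f (m (ct.2, b, ct.1))) ^ 2)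
      (((pdcont 0 hf).comp (mcont.comp (by fun_prop))).pow 2)
  simp only [sw1]
  exact swap2 (h := fun bt : ℝ × ℝ => ∫ c in II, (pd 0 f (m (bt.2, bt.1, c))) ^ 2)
    (pcont (h := fun (bt : ℝ × ℝ) (c : ℝ) => (pd 0 f (m (bt.2, bt.1, c))) ^ 2)
      (((pdcont 0 hf).comp (mcont.comp (by fun_prop))).pow 2))

lemma Psi_eq (hf : ContDiff ℝ (⊤ : ℕ∞) f) (a : ℝ) :
    (∫ y in cube, K1 f a (y 2)) = ∫ t in II, ∫ c in II, (pd 1 f (m (a, t, c))) ^ 2 := by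
  rw [transfer (fun y => K1 f a (y 2))]
  simp only [hm2]
  have hK : Continuous fun p : ℝ × ℝ × ℝ => K1 f a p.2.2 :=
    (K1cont hf).comp (show Continuous fun p : ℝ × ℝ × ℝ => (a, p.2.2) by fun_prop)
  rw [iter3 (h := fun p : ℝ × ℝ × ℝ => K1 f a p.2.2) hK]
  simp only []
  rw [intconst, intconst]
  simp only [K1]
  exact swap2 (h := fun ct : ℝ × ℝ => (pd 1 f (m (a, ct.2, ct.1))) ^ 2)
    (((pdcont 1 hf).comp (mcont.comp (by fun_prop))).pow 2)

lemma Psicont (hf : ContDiff ℝ (⊤ : ℕ∞) f) :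
    Continuous fun a : ℝ => ∫ y in cube, K1 f a (y 2) := by
  apply continuous_parametric_integral_of_continuous
    (f := fun (a : ℝ) (y : Sp) => K1 f a (y 2)) ?_ compactCube
  exact (K1cont hf).comp (show Continuous fun p : ℝ × Sp => (p.1, p.2 2) by fun_prop)

lemma IB (hf : ContDiff ℝ (⊤ : ℕ∞) f) :
    (∫ x in cube, (∫ y in cube, K1 f (x 0) (y 2))) = ∫ x in cube, (pd 1 f x) ^ 2 := by
  have hc : Continuous fun p : ℝ × ℝ × ℝ => (pd 1 f (m p)) ^ 2 :=
    ((pdcont 1 hf).comp mcont).pow 2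
  have hps : ∀ x : Sp, (∫ y in cube, K1 f (x 0) (y 2))
      = ∫ t in II, ∫ c in II, (pd 1 f (m (x 0, t, c))) ^ 2 := fun x => Psi_eq hf (x 0)
  simp only [hps]
  rw [transfer (fun x => ∫ t in II, ∫ c in II, (pd 1 f (m (x 0, t, c))) ^ 2),
    transfer (fun x => (pd 1 f x) ^ 2)]
  simp only [hm0]
  have hcF : Continuous fun a : ℝ => ∫ t in II, ∫ c in II, (pd 1 f (m (a, t, c))) ^ 2 := by
    apply pcont (h := fun (a : ℝ) (t : ℝ) => ∫ c in II, (pd 1 f (m (a, t, c))) ^ 2)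
    apply pcont (h := fun (q : ℝ × ℝ) (c : ℝ) => (pd 1 f (m (q.1, q.2, c))) ^ 2)
    exact ((pdcont 1 hf).comp (mcont.comp (by fun_prop))).pow 2
  have hK : Continuous fun p : ℝ × ℝ × ℝ => ∫ t in II, ∫ c in II, (pd 1 f (m (p.1, t, c))) ^ 2 :=
    hcF.comp (show Continuous fun p : ℝ × ℝ × ℝ => p.1 by fun_prop)
  rw [iter3 (h := fun p : ℝ × ℝ × ℝ => ∫ t in II, ∫ c in II, (pd 1 f (m (p.1, t, c))) ^ 2) hK]
  rw [iter3 (h := fun p : ℝ × ℝ × ℝ => (pd 1 f (m p)) ^ 2) hc]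
  simp only []
  simp only [intconst]

lemma IC (hf : ContDiff ℝ (⊤ : ℕ∞) f) :
    (∫ x in cube, K2 f (x 0) (x 1)) = ∫ x in cube, (pd 2 f x) ^ 2 := by
  have hc : Continuous fun p : ℝ × ℝ × ℝ => (pd 2 f (m p)) ^ 2 :=
    ((pdcont 2 hf).comp mcont).pow 2
  rw [transfer (fun x => K2 f (x 0) (x 1)), transfer (fun x => (pd 2 f x) ^ 2)]
  simp only [hm0, hm1]
  have hK : Continuous fun p : ℝ × ℝ × ℝ => K2 f p.1 p.2.1 :=
    (K2cont hf).comp (show Continuous fun p : ℝ × ℝ × ℝ => (p.1, p.2.1) by fun_prop)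
  rw [iter3 (h := fun p : ℝ × ℝ × ℝ => K2 f p.1 p.2.1) hK]
  rw [iter3 (h := fun p : ℝ × ℝ × ℝ => (pd 2 f (m p)) ^ 2) hc]
  simp only []
  simp only [K2, intconst]


lemma volCubeTop : volume cube < ⊤ := by rw [volCube]; exact ENNReal.one_lt_top

lemma scalarP (hf : ContDiff ℝ (⊤ : ℕ∞) f) :
    (∫ x in cube, (f x) ^ 2) - (∫ x in cube, f x) ^ 2
      ≤ (3 / 2) * ((∫ x in cube, (pd 0 f x) ^ 2) + (∫ x in cube, (pd 1 f x) ^ 2)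
          + (∫ x in cube, (pd 2 f x) ^ 2)) := by
  have fc : Continuous f := hf.continuous
  have fint : IntegrableOn f cube := intgC fc
  have f2int : IntegrableOn (fun x => (f x) ^ 2) cube := intgC (fc.pow 2)
  set I0 := ∫ x in cube, f x with hI0
  set J := ∫ x in cube, (f x) ^ 2 with hJ
  have cstint : ∀ c : ℝ, IntegrableOn (fun _ : Sp => c) cube := fun c =>
    integrableOn_const volCubeTop.ne
  -- inner expansion
  have inner_exp : ∀ x : Sp, (∫ y in cube, (f x - f y) ^ 2)
      = (J - 2 * f x * I0) + (f x) ^ 2 := by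
    intro x
    have e : (fun y => (f x - f y) ^ 2)
        = fun y => ((f y) ^ 2 - 2 * f x * f y) + (f x) ^ 2 := by
      funext y; ring
    have h1 : IntegrableOn (fun y => (f y) ^ 2 - 2 * f x * f y) cube :=
      f2int.sub (fint.const_mul (2 * f x))
    rw [e]
    rw [integral_add (f := fun y => (f y) ^ 2 - 2 * f x * f y) (g := fun _ => (f x) ^ 2)
        h1 (cstint _)]
    rw [integral_sub (f := fun y => (f y) ^ 2) (g := fun y => 2 * f x * f y) f2int
        (fint.const_mul (2 * f x))]
    rw [MeasureTheory.integral_const_mul, intconstC]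
  -- continuity of K-composites
  have cK0 : Continuous fun y : Sp => K0 f (y 1) (y 2) :=
    (K0cont hf).comp (show Continuous fun y : Sp => (y 1, y 2) by fun_prop)
  have cK2 : Continuous fun x : Sp => K2 f (x 0) (x 1) :=
    (K2cont hf).comp (show Continuous fun x : Sp => (x 0, x 1) by fun_prop)
  set CA := ∫ y in cube, K0 f (y 1) (y 2) with hCA
  have Rin : ∀ x : Sp, (∫ y in cube,
        3 * (K0 f (y 1) (y 2) + K1 f (x 0) (y 2) + K2 f (x 0) (x 1)))
      = 3 * (CA + (∫ y in cube, K1 f (x 0) (y 2)) + K2 f (x 0) (x 1)) := by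
    intro x
    have cK1x : Continuous fun y : Sp => K1 f (x 0) (y 2) :=
      (K1cont hf).comp (show Continuous fun y : Sp => (x 0, y 2) by fun_prop)
    rw [MeasureTheory.integral_const_mul]
    congr 1
    have h1 : IntegrableOn (fun y : Sp => K0 f (y 1) (y 2) + K1 f (x 0) (y 2)) cube :=
      (intgC cK0).add (intgC cK1x)
    rw [integral_add (f := fun y : Sp => K0 f (y 1) (y 2) + K1 f (x 0) (y 2))
        (g := fun _ => K2 f (x 0) (x 1)) h1 (cstint _)]
    rw [integral_add (f := fun y : Sp => K0 f (y 1) (y 2)) (g := fun y : Sp => K1 f (x 0) (y 2))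
        (intgC cK0) (intgC cK1x)]
    rw [intconstC]
  have step1 : ∀ x ∈ cube, (∫ y in cube, (f x - f y) ^ 2)
      ≤ ∫ y in cube, 3 * (K0 f (y 1) (y 2) + K1 f (x 0) (y 2) + K2 f (x 0) (x 1)) := by
    intro x hx
    have cK1x : Continuous fun y : Sp => K1 f (x 0) (y 2) :=
      (K1cont hf).comp (show Continuous fun y : Sp => (x 0, y 2) by fun_prop)
    refine setIntegral_mono_on (intgC ((continuous_const.sub fc).pow 2))
      (intgC (continuous_const.mul ((cK0.add cK1x).add continuous_const))) measCube ?_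
    intro y hy
    exact chainbound hf hx hy
  have cPsi := Psicont hf
  have cPsi0 : Continuous fun x : Sp => ∫ y in cube, K1 f (x 0) (y 2) :=
    cPsi.comp (show Continuous fun x : Sp => x 0 by fun_prop)
  have step2 : (∫ x in cube, ∫ y in cube, (f x - f y) ^ 2)
      ≤ ∫ x in cube, (3 : ℝ) * (CA + (∫ y in cube, K1 f (x 0) (y 2)) + K2 f (x 0) (x 1)) := by
    refine setIntegral_mono_on ?_ ?_ measCube ?_
    · simp only [inner_exp]
      exact intgC (by fun_prop)
    · exact intgC (continuous_const.mul ((continuous_const.add cPsi0).add cK2))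
    · intro x hx
      exact (step1 x hx).trans_eq (Rin x)
  have lhs_eq : (∫ x in cube, ∫ y in cube, (f x - f y) ^ 2) = 2 * J - 2 * I0 ^ 2 := by
    simp only [inner_exp]
    have e : (fun x => (J - 2 * f x * I0) + (f x) ^ 2)
        = fun x => ((f x) ^ 2 - (2 * I0) * f x) + J := by
      funext x; ring
    have h1 : IntegrableOn (fun x => (f x) ^ 2 - 2 * I0 * f x) cube :=
      f2int.sub (fint.const_mul (2 * I0))
    rw [e]
    rw [integral_add (f := fun x => (f x) ^ 2 - 2 * I0 * f x) (g := fun _ => J)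
        h1 (cstint _)]
    rw [integral_sub (f := fun x => (f x) ^ 2) (g := fun x => 2 * I0 * f x) f2int
        (fint.const_mul (2 * I0))]
    rw [MeasureTheory.integral_const_mul, intconstC]
    ring
  have rhs_eq : (∫ x in cube, (3 : ℝ) * (CA + (∫ y in cube, K1 f (x 0) (y 2))
        + K2 f (x 0) (x 1)))
      = 3 * ((∫ x in cube, (pd 0 f x) ^ 2) + (∫ x in cube, (pd 1 f x) ^ 2)
          + (∫ x in cube, (pd 2 f x) ^ 2)) := by
    rw [MeasureTheory.integral_const_mul]
    congr 1
    have h1 : IntegrableOn (fun x : Sp => CA + ∫ y in cube, K1 f (x 0) (y 2)) cube :=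
      (cstint CA).add (intgC cPsi0)
    rw [integral_add (f := fun x : Sp => CA + ∫ y in cube, K1 f (x 0) (y 2))
        (g := fun x : Sp => K2 f (x 0) (x 1)) h1 (intgC cK2)]
    rw [integral_add (f := fun _ : Sp => CA) (g := fun x : Sp => ∫ y in cube, K1 f (x 0) (y 2))
        (cstint CA) (intgC cPsi0)]
    rw [intconstC]
    rw [hCA, IA hf, IB hf, IC hf]
  have := step2
  rw [lhs_eq, rhs_eq] at this
  linarith


lemma var_eq {g : Sp → ℝ} (hg : Continuous g) (c : ℝ) :
    (∫ x in cube, (c - g x) ^ 2)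
      = (∫ x in cube, (g x) ^ 2) - 2 * c * (∫ x in cube, g x) + c ^ 2 := by
  have gint : IntegrableOn g cube := intgC hg
  have g2int : IntegrableOn (fun x => (g x) ^ 2) cube := intgC (hg.pow 2)
  have cstint : ∀ d : ℝ, IntegrableOn (fun _ : Sp => d) cube := fun d =>
    integrableOn_const volCubeTop.ne
  have e : (fun x => (c - g x) ^ 2) = fun x => ((g x) ^ 2 - 2 * c * g x) + c ^ 2 := by
    funext x; ring
  have h1 : IntegrableOn (fun x => (g x) ^ 2 - 2 * c * g x) cube :=
    g2int.sub (gint.const_mul (2 * c))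
  rw [e]
  rw [integral_add (f := fun x => (g x) ^ 2 - 2 * c * g x) (g := fun _ => c ^ 2)
      h1 (cstint _)]
  rw [integral_sub (f := fun x => (g x) ^ 2) (g := fun x => 2 * c * g x) g2int
      (gint.const_mul (2 * c))]
  rw [MeasureTheory.integral_const_mul, intconstC]

end TP

open TP in
theorem torus_poincare' (ρbar : ℝ) (hρbar : 0 < ρbar) :
    ∃ C : ℝ, 0 < C ∧
      ∀ ρ : Sp → ℝ, Measurable ρ → (∀ x : Sp, 0 ≤ ρ x) →
        (∀ᵐ x ∂(volume.restrict cube), ρ x ≤ ρbar) →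
        (∫ x in cube, ρ x) = 1 →
        ∀ u : Sp → Sp, ContDiff ℝ (⊤ : ℕ∞) u →
          (∫ x in cube, ρ x • u x) = 0 →
          (∫ x in cube, ρ x * ∑ i, (u x i) ^ 2)
              ≤ C * ∫ x in cube, ∑ i, ∑ j, (pd j (fun y => u y i) x) ^ 2
          ∧ (∫ x in cube, ∑ i, (u x i) ^ 2)
              ≤ C * ∫ x in cube, ∑ i, ∑ j, (pd j (fun y => u y i) x) ^ 2 := by
  refine ⟨(3 / 2) * (1 + ρbar ^ 2) * (1 + ρbar), by nlinarith [sq_nonneg ρbar], ?_⟩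
  intro ρ hρm hρ0 hρbd hρ1 u hu hmean
  have hui : ∀ i : Fin 3, ContDiff ℝ (⊤ : ℕ∞) (fun y => u y i) := fun i =>
    (ContinuousLinearMap.proj (R := ℝ) (φ := fun _ : Fin 3 => ℝ) i).contDiff.comp hu
  have huc : ∀ i : Fin 3, Continuous fun y => u y i := fun i => (hui i).continuous
  have hucu : Continuous u := hu.continuous
  have cstint : ∀ d : ℝ, IntegrableOn (fun _ : Sp => d) cube := fun d =>
    integrableOn_const volCubeTop.ne
  have hρint : IntegrableOn ρ cube := by
    refine Integrable.mono' (integrable_const ρbar) hρm.aestronglyMeasurable.restrict ?_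
    filter_upwards [hρbd] with x hx
    rw [Real.norm_eq_abs, abs_of_nonneg (hρ0 x)]; exact hx
  -- component zero-mean
  have hzero : ∀ i : Fin 3, (∫ x in cube, ρ x * u x i) = 0 := by
    intro i
    obtain ⟨Mu, hMu⟩ := compactCube.exists_bound_of_continuousOn hucu.continuousOn
    have hint : IntegrableOn (fun x => ρ x • u x) cube := by
      refine Integrable.mono' (integrable_const (ρbar * Mu))
        (hρm.aestronglyMeasurable.restrict.smul hucu.aestronglyMeasurable.restrict) ?_
      filter_upwards [hρbd, ae_restrict_mem measCube] with x hx hxc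
      rw [norm_smul, Real.norm_eq_abs, abs_of_nonneg (hρ0 x)]
      have h1 : ‖u x‖ ≤ Mu := hMu x hxc
      have h2 : (0:ℝ) ≤ Mu := le_trans (norm_nonneg _) h1
      exact mul_le_mul hx h1 (norm_nonneg _) (le_of_lt hρbar)
    have := (ContinuousLinearMap.proj (R := ℝ) (φ := fun _ : Fin 3 => ℝ) i).integral_comp_comm
      hint
    rw [hmean] at this
    simp only [ContinuousLinearMap.proj_apply, Pi.smul_apply, smul_eq_mul,
      ContinuousLinearMap.map_zero] at this
    simpa using this
  -- per-component estimates
  have key : ∀ i : Fin 3, (∫ x in cube, (u x i) ^ 2)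
      ≤ (3 / 2) * (1 + ρbar ^ 2) * ∑ j : Fin 3, ∫ x in cube, (pd j (fun y => u y i) x) ^ 2 := by
    intro i
    set f : Sp → ℝ := fun y => u y i with hfdef
    have hfc : Continuous f := huc i
    set Ii := ∫ x in cube, f x with hIi
    set Ji := ∫ x in cube, (f x) ^ 2 with hJi
    have hvar : (∫ x in cube, (Ii - f x) ^ 2) = Ji - Ii ^ 2 := by
      rw [var_eq hfc]; ring
    have hvnn : (0:ℝ) ≤ Ji - Ii ^ 2 := hvar ▸ integral_nonneg fun x => sq_nonneg _
    have key1 : Ji - Ii ^ 2 ≤ (3 / 2) * ((∫ x in cube, (pd 0 f x) ^ 2)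
        + (∫ x in cube, (pd 1 f x) ^ 2) + (∫ x in cube, (pd 2 f x) ^ 2)) := scalarP (hui i)
    -- mean bound
    have hgc : Continuous fun x => Ii - f x := continuous_const.sub hfc
    have hρfint : IntegrableOn (fun x => ρ x * (Ii - f x)) cube := by
      obtain ⟨Mg, hMg⟩ := compactCube.exists_bound_of_continuousOn hgc.continuousOn
      refine Integrable.mono' (integrable_const (ρbar * Mg))
        (hρm.aestronglyMeasurable.restrict.mul hgc.aestronglyMeasurable.restrict) ?_
      filter_upwards [hρbd, ae_restrict_mem measCube] with x hx hxc
      rw [Real.norm_eq_abs, abs_mul, abs_of_nonneg (hρ0 x)]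
      exact mul_le_mul hx (hMg x hxc) (abs_nonneg _) (le_of_lt hρbar)
    have hIeq : Ii = ∫ x in cube, ρ x * (Ii - f x) := by
      have e : (fun x => ρ x * (Ii - f x)) = fun x => ρ x * Ii - ρ x * f x := by
        funext x; ring
      have hρf : IntegrableOn (fun x => ρ x * f x) cube := by
        obtain ⟨Mf, hMf⟩ := compactCube.exists_bound_of_continuousOn hfc.continuousOn
        refine Integrable.mono' (integrable_const (ρbar * Mf))
          (hρm.aestronglyMeasurable.restrict.mul hfc.aestronglyMeasurable.restrict) ?_
        filter_upwards [hρbd, ae_restrict_mem measCube] with x hx hxc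
        rw [Real.norm_eq_abs, abs_mul, abs_of_nonneg (hρ0 x)]
        exact mul_le_mul hx (hMf x hxc) (abs_nonneg _) (le_of_lt hρbar)
      rw [e]
      rw [integral_sub (f := fun x => ρ x * Ii) (g := fun x => ρ x * f x)
        (hρint.mul_const Ii) hρf]
      rw [MeasureTheory.integral_mul_const, hρ1, hzero i]
      simp
    have habs : |Ii| ≤ ρbar * ∫ x in cube, |Ii - f x| := by
      calc |Ii| = |∫ x in cube, ρ x * (Ii - f x)| := by rw [← hIeq]
        _ ≤ ∫ x in cube, |ρ x * (Ii - f x)| := by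
            have := norm_integral_le_integral_norm (μ := volume.restrict cube)
                (f := fun x => ρ x * (Ii - f x))
            simpa only [Real.norm_eq_abs] using this
        _ ≤ ∫ x in cube, ρbar * |Ii - f x| := by
            refine integral_mono_ae hρfint.abs ((intgC hgc.abs).const_mul ρbar) ?_
            filter_upwards [hρbd] with x hx
            rw [abs_mul, abs_of_nonneg (hρ0 x)]
            exact mul_le_mul_of_nonneg_right hx (abs_nonneg _)
        _ = ρbar * ∫ x in cube, |Ii - f x| := MeasureTheory.integral_const_mul _ _
    have hcs : (∫ x in cube, |Ii - f x|) ^ 2 ≤ ∫ x in cube, (Ii - f x) ^ 2 := by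
      have h1 := cs (μ := volume.restrict cube) (g := fun x => |Ii - f x|)
        (intgC hgc.abs) ?_
      · calc (∫ x in cube, |Ii - f x|) ^ 2 ≤ ∫ x in cube, |Ii - f x| ^ 2 := h1
          _ = ∫ x in cube, (Ii - f x) ^ 2 := by
              refine integral_congr_ae (Filter.Eventually.of_forall fun x => ?_)
              exact sq_abs _
      · have : (fun x => |Ii - f x| ^ 2) = fun x => (Ii - f x) ^ 2 := by
          funext x; exact sq_abs _
        rw [this]; exact intgC (hgc.pow 2)
    have key2 : Ii ^ 2 ≤ ρbar ^ 2 * (Ji - Ii ^ 2) := by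
      have hnn : (0:ℝ) ≤ ∫ x in cube, |Ii - f x| := integral_nonneg fun x => abs_nonneg _
      have h2 : Ii ^ 2 ≤ (ρbar * ∫ x in cube, |Ii - f x|) ^ 2 := by
        calc Ii ^ 2 = |Ii| ^ 2 := (sq_abs Ii).symm
          _ ≤ (ρbar * ∫ x in cube, |Ii - f x|) ^ 2 :=
              pow_le_pow_left₀ (abs_nonneg Ii) habs 2
      calc Ii ^ 2 ≤ (ρbar * ∫ x in cube, |Ii - f x|) ^ 2 := h2
        _ = ρbar ^ 2 * (∫ x in cube, |Ii - f x|) ^ 2 := by ring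
        _ ≤ ρbar ^ 2 * ∫ x in cube, (Ii - f x) ^ 2 := by
            exact mul_le_mul_of_nonneg_left hcs (sq_nonneg _)
        _ = ρbar ^ 2 * (Ji - Ii ^ 2) := by rw [hvar]
    -- combine
    have hsum3 : (∑ j : Fin 3, ∫ x in cube, (pd j (fun y => u y i) x) ^ 2)
        = (∫ x in cube, (pd 0 f x) ^ 2) + (∫ x in cube, (pd 1 f x) ^ 2)
          + (∫ x in cube, (pd 2 f x) ^ 2) := by
      rw [Fin.sum_univ_three]
    rw [hsum3]
    have : Ji ≤ (1 + ρbar ^ 2) * (Ji - Ii ^ 2) := by nlinarith [key2, hvnn]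
    nlinarith [key1, hvnn, sq_nonneg ρbar]
  -- sums and conclusions
  have hpdint : ∀ (i j : Fin 3), IntegrableOn (fun x => (pd j (fun y => u y i) x) ^ 2) cube :=
    fun i j => intgC ((pdcont j (hui i)).pow 2)
  have hDsplit : (∫ x in cube, ∑ i, ∑ j, (pd j (fun y => u y i) x) ^ 2)
      = ∑ i : Fin 3, ∑ j : Fin 3, ∫ x in cube, (pd j (fun y => u y i) x) ^ 2 := by
    rw [integral_finset_sum _ (fun i _ => integrable_finset_sum _ (fun j _ => hpdint i j))]
    exact Finset.sum_congr rfl fun i _ => integral_finset_sum _ fun j _ => hpdint i j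
  set D := ∫ x in cube, ∑ i, ∑ j, (pd j (fun y => u y i) x) ^ 2 with hD
  have hDnn : (0:ℝ) ≤ D :=
    integral_nonneg fun x => Finset.sum_nonneg fun i _ =>
      Finset.sum_nonneg fun j _ => sq_nonneg _
  have hS2 : (∫ x in cube, ∑ i, (u x i) ^ 2) = ∑ i : Fin 3, ∫ x in cube, (u x i) ^ 2 :=
    integral_finset_sum _ fun i _ => intgC ((huc i).pow 2)
  have concl2 : (∫ x in cube, ∑ i, (u x i) ^ 2) ≤ (3 / 2) * (1 + ρbar ^ 2) * D := by
    rw [hS2, hDsplit]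
    calc (∑ i : Fin 3, ∫ x in cube, (u x i) ^ 2)
        ≤ ∑ i : Fin 3, (3 / 2) * (1 + ρbar ^ 2)
            * ∑ j : Fin 3, ∫ x in cube, (pd j (fun y => u y i) x) ^ 2 :=
          Finset.sum_le_sum fun i _ => key i
      _ = (3 / 2) * (1 + ρbar ^ 2)
            * ∑ i : Fin 3, ∑ j : Fin 3, ∫ x in cube, (pd j (fun y => u y i) x) ^ 2 := by
          rw [Finset.mul_sum]
  have hSnn : (0:ℝ) ≤ ∫ x in cube, ∑ i, (u x i) ^ 2 :=
    integral_nonneg fun x => Finset.sum_nonneg fun i _ => sq_nonneg _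
  constructor
  · -- weighted bound
    have hScont : Continuous fun x : Sp => ∑ i, (u x i) ^ 2 := by
      apply continuous_finset_sum
      intro i _
      exact (huc i).pow 2
    have hwint : IntegrableOn (fun x => ρ x * ∑ i, (u x i) ^ 2) cube := by
      obtain ⟨Ms, hMs⟩ := compactCube.exists_bound_of_continuousOn hScont.continuousOn
      refine Integrable.mono' (integrable_const (ρbar * Ms))
        (hρm.aestronglyMeasurable.restrict.mul hScont.aestronglyMeasurable.restrict) ?_
      filter_upwards [hρbd, ae_restrict_mem measCube] with x hx hxc
      rw [Real.norm_eq_abs, abs_mul, abs_of_nonneg (hρ0 x)]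
      exact mul_le_mul hx (hMs x hxc) (abs_nonneg _) (le_of_lt hρbar)
    have h1 : (∫ x in cube, ρ x * ∑ i, (u x i) ^ 2)
        ≤ ∫ x in cube, ρbar * ∑ i, (u x i) ^ 2 := by
      refine integral_mono_ae hwint ((intgC hScont).const_mul ρbar) ?_
      filter_upwards [hρbd] with x hx
      exact mul_le_mul_of_nonneg_right hx
        (Finset.sum_nonneg fun i _ => sq_nonneg _)
    have h2 : (∫ x in cube, ρbar * ∑ i, (u x i) ^ 2)
        = ρbar * ∫ x in cube, ∑ i, (u x i) ^ 2 := MeasureTheory.integral_const_mul _ _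
    calc (∫ x in cube, ρ x * ∑ i, (u x i) ^ 2)
        ≤ ρbar * ∫ x in cube, ∑ i, (u x i) ^ 2 := h1.trans_eq h2
      _ ≤ ρbar * ((3 / 2) * (1 + ρbar ^ 2) * D) :=
          mul_le_mul_of_nonneg_left concl2 (le_of_lt hρbar)
      _ ≤ (3 / 2) * (1 + ρbar ^ 2) * (1 + ρbar) * D := by nlinarith [sq_nonneg ρbar, hDnn]
  · calc (∫ x in cube, ∑ i, (u x i) ^ 2) ≤ (3 / 2) * (1 + ρbar ^ 2) * D := concl2
      _ ≤ (3 / 2) * (1 + ρbar ^ 2) * (1 + ρbar) * D := by nlinarith [sq_nonneg ρbar, hDnn]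

/-- Poincaré-type inequalities on the torus: for `ρ̄ > 0` there is `C > 0`
depending only on `ρ̄` such that for every measurable, `ℤ³`-periodic, nonnegative `ρ`
with `ρ ≤ ρ̄` a.e. and `∫_{[0,1]³} ρ = 1`, and every smooth `ℤ³`-periodic vector field
`u` with `∫_{[0,1]³} ρ u = 0`, one has
`∫ ρ|u|² ≤ C ∫ |∇u|²` and `∫ |u|² ≤ C ∫ |∇u|²`. -/
theorem torus_poincare (ρbar : ℝ) (hρbar : 0 < ρbar) :
    ∃ C : ℝ, 0 < C ∧
      ∀ ρ : Sp → ℝ, Measurable ρ → PerR ρ → (∀ x : Sp, 0 ≤ ρ x) →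
        (∀ᵐ x ∂(volume.restrict cube), ρ x ≤ ρbar) →
        (∫ x in cube, ρ x) = 1 →
        ∀ u : Sp → Sp, ContDiff ℝ (⊤ : ℕ∞) u → PerV u →
          (∫ x in cube, ρ x • u x) = 0 →
          (∫ x in cube, ρ x * ∑ i, (u x i) ^ 2)
              ≤ C * ∫ x in cube, ∑ i, ∑ j, (pd j (fun y => u y i) x) ^ 2
          ∧ (∫ x in cube, ∑ i, (u x i) ^ 2)
              ≤ C * ∫ x in cube, ∑ i, ∑ j, (pd j (fun y => u y i) x) ^ 2 := by
  
  obtain ⟨C, hC, h⟩ := torus_poincare' ρbar hρbar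
  exact ⟨C, hC, fun ρ hρm _ hρ0 hρbd hρ1 u hu _ hmean =>
    h ρ hρm hρ0 hρbd hρ1 u hu hmean⟩
end
end

section
/- Let c > 0 and let E : [0,∞) → ℝ be a differentiable function with E(t) ≥ 0 and E'(t) ≤ −c·E(t)^{4/3} for all t ≥ 0. Then for all t ≥ 0, E(t) ≤ max(E(0), 27/c³)·(1+t)^{−3}. -/
/-- If `E : [0,∞) → ℝ` is differentiable, nonnegative, and satisfies the
nonlinear differential inequality `E' ≤ -c E^{4/3}` on `[0,∞)` for some `c > 0`, then
`E(t) ≤ max(E(0), 27/c³) (1+t)^{-3}` for all `t ≥ 0`. -/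
theorem decay_from_nonlinear_ode (c : ℝ) (hc : 0 < c) (E E' : ℝ → ℝ)
    (hderiv : ∀ t : ℝ, 0 ≤ t → HasDerivWithinAt E (E' t) (Set.Ici 0) t)
    (hpos : ∀ t : ℝ, 0 ≤ t → 0 ≤ E t)
    (hineq : ∀ t : ℝ, 0 ≤ t → E' t ≤ -c * E t ^ ((4 : ℝ) / 3)) :
    ∀ t : ℝ, 0 ≤ t → E t ≤ max (E 0) (27 / c ^ 3) * (1 + t) ^ (-3 : ℝ) := by
  intro t ht
  set M := max (E 0) (27 / c ^ 3) with hM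
  have hc3 : (0:ℝ) < 27 / c ^ 3 := by positivity
  have hMpos : 0 < M := lt_of_lt_of_le hc3 (le_max_right _ _)
  have h1t : (0:ℝ) < 1 + t := by linarith
  have hRHSpos : 0 < M * (1 + t) ^ (-3 : ℝ) :=
    mul_pos hMpos (Real.rpow_pos_of_pos h1t _)
  rcases eq_or_lt_of_le (hpos t ht) with h0 | hEt
  · rw [← h0]; exact hRHSpos.le
  -- E is antitone on [0,∞)
  have hcontE : ContinuousOn E (Set.Ici 0) := fun x hx => (hderiv x hx).continuousWithinAt
  have hderiv' : ∀ x : ℝ, 0 < x → HasDerivAt E (E' x) x := fun x hx =>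
    (hderiv x hx.le).hasDerivAt (Ici_mem_nhds hx)
  have hanti : AntitoneOn E (Set.Ici 0) := by
    refine antitoneOn_of_deriv_nonpos (convex_Ici 0) hcontE ?_ ?_
    · intro x hx
      rw [interior_Ici] at hx
      exact (hderiv' x hx).differentiableAt.differentiableWithinAt
    · intro x hx
      rw [interior_Ici] at hx
      rw [(hderiv' x hx).deriv]
      have h1 : (0:ℝ) ≤ E x ^ ((4:ℝ)/3) := Real.rpow_nonneg (hpos x hx.le) _
      have := hineq x hx.le
      nlinarith
  have hEspos : ∀ s ∈ Set.Icc (0:ℝ) t, 0 < E s := fun s hs =>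
    lt_of_lt_of_le hEt (hanti hs.1 (Set.mem_Ici.mpr ht) hs.2)
  -- the auxiliary function H s = E s ^ (-1/3) - (c/3) s is monotone on [0, t]
  set G : ℝ → ℝ := fun s => E s ^ (-1/3 : ℝ) with hG
  set H : ℝ → ℝ := fun s => G s - c/3 * s with hH
  have hmono : MonotoneOn H (Set.Icc 0 t) := by
    have hHd : ∀ x ∈ Set.Ioo (0:ℝ) t,
        HasDerivAt H ((-1/3 : ℝ) * E x ^ ((-1/3:ℝ) - 1) * E' x - c/3) x := by
      intro x hx
      have hEx := hEspos x (Set.mem_Icc.mpr ⟨hx.1.le, hx.2.le⟩)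
      have h1 : HasDerivAt (fun s => E s ^ (-1/3 : ℝ))
          ((-1/3 : ℝ) * E x ^ ((-1/3:ℝ) - 1) * E' x) x :=
        (Real.hasDerivAt_rpow_const (Or.inl hEx.ne')).comp x (hderiv' x hx.1)
      have h2 := h1.sub (((hasDerivAt_id x).const_mul (c/3)))
      rw [mul_one] at h2
      exact h2
    refine monotoneOn_of_deriv_nonneg (convex_Icc 0 t) ?_ ?_ ?_
    · -- continuity of H on Icc 0 t
      have : ContinuousOn G (Set.Icc 0 t) := by
        refine ContinuousOn.rpow_const (hcontE.mono ?_) fun x hx => Or.inl (hEspos x hx).ne'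
        exact fun x hx => hx.1
      exact this.sub ((continuous_const.mul continuous_id).continuousOn)
    · intro x hx
      rw [interior_Icc] at hx
      exact (hHd x hx).differentiableAt.differentiableWithinAt
    · intro x hx
      rw [interior_Icc] at hx
      rw [(hHd x hx).deriv]
      have hEx := hEspos x (Set.mem_Icc.mpr ⟨hx.1.le, hx.2.le⟩)
      have key : (-1/3 : ℝ) * E x ^ ((-1/3:ℝ) - 1) * E' x ≥ c/3 := by
        have h2 : E' x ≤ -c * E x ^ ((4:ℝ)/3) := hineq x hx.1.le
        have h3 : (0:ℝ) < E x ^ ((-1/3:ℝ) - 1) := Real.rpow_pos_of_pos hEx _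
        have h4 : E x ^ ((-1/3:ℝ) - 1) * E x ^ ((4:ℝ)/3) = 1 := by
          rw [← Real.rpow_add hEx]
          norm_num
        have h5 : (-1/3 : ℝ) * E x ^ ((-1/3:ℝ) - 1) * E' x ≥
            (-1/3 : ℝ) * E x ^ ((-1/3:ℝ) - 1) * (-c * E x ^ ((4:ℝ)/3)) := by
          have hneg : (-1/3 : ℝ) * E x ^ ((-1/3:ℝ) - 1) ≤ 0 := by nlinarith
          exact mul_le_mul_of_nonpos_left h2 hneg
        calc (-1/3 : ℝ) * E x ^ ((-1/3:ℝ) - 1) * E' x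
            ≥ (-1/3 : ℝ) * E x ^ ((-1/3:ℝ) - 1) * (-c * E x ^ ((4:ℝ)/3)) := h5
          _ = (c/3) * (E x ^ ((-1/3:ℝ) - 1) * E x ^ ((4:ℝ)/3)) := by ring
          _ = c/3 := by rw [h4, mul_one]
      linarith
  have hkey : G 0 + c/3 * t ≤ G t := by
    have := hmono (Set.left_mem_Icc.mpr ht) (Set.right_mem_Icc.mpr ht) ht
    simp only [hH] at this
    linarith
  -- G 0 ≥ M ^ (-1/3)
  have hE0pos : 0 < E 0 := hEspos 0 (Set.left_mem_Icc.mpr ht)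
  have hG0 : M ^ (-1/3 : ℝ) ≤ G 0 :=
    Real.rpow_le_rpow_of_nonpos hE0pos (le_max_left _ _) (by norm_num)
  -- c/3 ≥ M ^ (-1/3)
  have hMc : (27 / c ^ 3 : ℝ) ^ (-1/3 : ℝ) = c / 3 := by
    have h27 : (27 / c ^ 3 : ℝ) = (3 / c) ^ (3 : ℕ) := by
      field_simp; ring
    rw [h27, ← Real.rpow_natCast (3/c) 3, ← Real.rpow_mul (by positivity)]
    norm_num
    rw [Real.rpow_neg_one, inv_div]
  have hc3' : M ^ (-1/3 : ℝ) ≤ c / 3 := by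
    rw [← hMc]
    exact Real.rpow_le_rpow_of_nonpos hc3 (le_max_right _ _) (by norm_num)
  have hlow : M ^ (-1/3 : ℝ) * (1 + t) ≤ G t := by
    have : M ^ (-1/3 : ℝ) * (1 + t) = M ^ (-1/3 : ℝ) + M ^ (-1/3 : ℝ) * t := by ring
    rw [this]
    have h1 : M ^ (-1/3 : ℝ) * t ≤ c/3 * t := mul_le_mul_of_nonneg_right hc3' ht
    linarith
  -- finish: raise to the power -3
  have hMp : 0 < M ^ (-1/3 : ℝ) := Real.rpow_pos_of_pos hMpos _
  have hlhs : 0 < M ^ (-1/3 : ℝ) * (1 + t) := mul_pos hMp h1t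
  have hfin : G t ^ (-3 : ℝ) ≤ (M ^ (-1/3 : ℝ) * (1 + t)) ^ (-3 : ℝ) :=
    Real.rpow_le_rpow_of_nonpos hlhs hlow (by norm_num)
  have hGt : G t ^ (-3 : ℝ) = E t := by
    rw [hG, ← Real.rpow_mul hEt.le]
    norm_num
  have hrhs : (M ^ (-1/3 : ℝ) * (1 + t)) ^ (-3 : ℝ) = M * (1 + t) ^ (-3 : ℝ) := by
    rw [Real.mul_rpow hMp.le h1t.le, ← Real.rpow_mul hMpos.le]
    norm_num
  rw [← hGt, ← hrhs]
  exact hfin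
end
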